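/- arXiv:2012.02140 — 4 statements merged into one kernel-verified Lean document; each statement's English description precedes it below -/
import Mathlib

section
/- Let (M,g) be a pseudo-Riemannian manifold, φ a smooth function on M, τ the scalar curvature, λ a real constant, and m ≠ 0 a real constant. Set θ = e^{-φ/m}. Then Hess(φ) = (τ - λ)g + (1/m) dφ ⊗ dφ holds if and only if Hess(θ) = -(θ/m)(τ - λ)g. -/
/-- On a pseudo-Riemannian manifold (modeled on a real normed space `E`,
with metric tensor field `g`, flat-model Hessian `Hess f = fderiv (fderiv f)`,
scalar curvature `τ`), for a smooth potential `φ`, a constant `lam` and `m ≠ 0`,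
setting `θ = exp (-φ/m)`, the generalized quasi Yamabe gradient soliton equation
`Hess φ = (τ - lam) g + (1/m) dφ ⊗ dφ` holds iff `Hess θ = -(θ/m)(τ - lam) g`. -/
theorem gqy_soliton_iff_conformal_hessian
    {E : Type*} [NormedAddCommGroup E] [NormedSpace ℝ E]
    (g : E → E →L[ℝ] E →L[ℝ] ℝ) (τ : E → ℝ) (φ : E → ℝ)
    (hφ : ContDiff ℝ (⊤ : ℕ∞) φ) (lam m : ℝ) (hm : m ≠ 0)
    (θ : E → ℝ) (hθ : θ = fun x => Real.exp (-φ x / m)) :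
    (∀ x : E, ∀ X Y : E,
        fderiv ℝ (fderiv ℝ φ) x X Y
          = (τ x - lam) * g x X Y + (1 / m) * (fderiv ℝ φ x X) * (fderiv ℝ φ x Y))
      ↔
    (∀ x : E, ∀ X Y : E,
        fderiv ℝ (fderiv ℝ θ) x X Y = -(θ x / m) * (τ x - lam) * g x X Y) := by
  have hφd : Differentiable ℝ φ := hφ.differentiable (by simp)
  have hφ'd : Differentiable ℝ (fderiv ℝ φ) :=
    (hφ.fderiv_right (m := 1) (by exact WithTop.coe_le_coe.mpr le_top)).differentiable one_ne_zero
  have hθ2 : θ = fun y => Real.exp (-(1/m) * φ y) := by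
    rw [hθ]; funext y; ring_nf
  have h0 : ∀ x : E, HasFDerivAt θ ((-(1/m) * θ x) • fderiv ℝ φ x) x := by
    intro x
    have h1 : HasFDerivAt (fun y => -(1/m) * φ y) ((-(1/m)) • fderiv ℝ φ x) x :=
      ((hφd x).hasFDerivAt).const_mul _
    have h2 := h1.exp
    rw [hθ2]
    convert h2 using 1
    rw [smul_smul, mul_comm]
  have hθd : Differentiable ℝ θ := fun x => (h0 x).differentiableAt
  have hdθ : fderiv ℝ θ = fun x => (-(1/m) * θ x) • fderiv ℝ φ x :=
    funext fun x => (h0 x).fderiv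
  have key : ∀ x : E, ∀ X Y : E,
      fderiv ℝ (fderiv ℝ θ) x X Y
        = -(θ x / m) * fderiv ℝ (fderiv ℝ φ) x X Y
          + (θ x / (m * m)) * (fderiv ℝ φ x X) * (fderiv ℝ φ x Y) := by
    intro x X Y
    have hc : DifferentiableAt ℝ (fun y => -(1/m) * θ y) x :=
      (hθd x).const_mul _
    have h3 : fderiv ℝ (fun y => (-(1/m) * θ y) • fderiv ℝ φ y) x
        = (-(1/m) * θ x) • fderiv ℝ (fderiv ℝ φ) x
          + (fderiv ℝ (fun y => -(1/m) * θ y) x).smulRight (fderiv ℝ φ x) :=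
      fderiv_smul hc (hφ'd x)
    have hc' : fderiv ℝ (fun y => -(1/m) * θ y) x = (-(1/m)) • fderiv ℝ θ x :=
      fderiv_const_mul (hθd x) _
    rw [hdθ, h3, hc', hdθ]
    simp [smul_smul]
    ring
  have hθne : ∀ x, θ x ≠ 0 := by
    intro x; rw [hθ]; exact (Real.exp_pos _).ne'
  constructor
  · intro h x X Y
    rw [key x X Y, h x X Y]
    ring
  · intro h x X Y
    have h2 := (key x X Y).symm.trans (h x X Y)
    have hne : (-(θ x / m)) ≠ 0 := by
      simp [hθne x, hm]
    have h3 : -(θ x / m) * fderiv ℝ (fderiv ℝ φ) x X Y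
        = -(θ x / m) * ((τ x - lam) * g x X Y
            + (1 / m) * (fderiv ℝ φ x X) * (fderiv ℝ φ x Y)) := by
      linear_combination h2
    exact mul_left_cancel₀ hne h3
end

section
/- Every generalized quasi Yamabe gradient soliton (M,g,φ,μ=1/m,λ) is a conformal gradient soliton: there exists a smooth function θ on M (namely θ = e^{-φ/m}) and a smooth function k on M such that Hess(θ) = k g. -/
/-- Every generalized quasi Yamabe gradient soliton
(`Hess φ = (τ - lam) g + (1/m) dφ ⊗ dφ`, flat model on a normed space) is a
conformal gradient soliton: there are smooth functions `θ` (namely `θ = e^{-φ/m}`)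
and `k` with `Hess θ = k g`. -/
theorem gqy_soliton_is_conformal_gradient_soliton
    {E : Type*} [NormedAddCommGroup E] [NormedSpace ℝ E]
    (g : E → E →L[ℝ] E →L[ℝ] ℝ) (τ : E → ℝ) (hτ : ContDiff ℝ (⊤ : ℕ∞) τ)
    (φ : E → ℝ) (hφ : ContDiff ℝ (⊤ : ℕ∞) φ) (lam m : ℝ) (hm : m ≠ 0)
    (hsol : ∀ x : E, ∀ X Y : E,
        fderiv ℝ (fderiv ℝ φ) x X Y
          = (τ x - lam) * g x X Y + (1 / m) * (fderiv ℝ φ x X) * (fderiv ℝ φ x Y)) :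
    ∃ θ k : E → ℝ, ContDiff ℝ (⊤ : ℕ∞) θ ∧ ContDiff ℝ (⊤ : ℕ∞) k ∧
      θ = (fun x => Real.exp (-φ x / m)) ∧
      ∀ x : E, ∀ X Y : E, fderiv ℝ (fderiv ℝ θ) x X Y = k x * g x X Y := by
  set θ : E → ℝ := fun x => Real.exp (-φ x / m) with hθdef
  set a : E → ℝ := fun x => Real.exp (-φ x / m) * (-1 / m) with hadef
  -- differentiability facts
  have hφd : Differentiable ℝ φ := hφ.differentiable (by simp)
  have hφ' : ContDiff ℝ (⊤ : ℕ∞) (fderiv ℝ φ) := hφ.fderiv_right (by simp)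
  have hφ'd : Differentiable ℝ (fderiv ℝ φ) := hφ'.differentiable (by simp)
  have hc : ∀ x : E, HasFDerivAt (fun x => -φ x / m)
      ((-1 / m) • fderiv ℝ φ x) x := by
    intro x
    simp only [div_eq_mul_inv]
    have := ((hφd x).hasFDerivAt.neg).mul_const m⁻¹
    refine this.congr_fderiv ?_
    ext v
    simp only [ContinuousLinearMap.smul_apply, ContinuousLinearMap.neg_apply, smul_eq_mul]
    ring
  have hθ' : ∀ x : E, HasFDerivAt θ (a x • fderiv ℝ φ x) x := by
    intro x
    have := (hc x).exp
    convert this using 1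
    ext v
    simp [hadef, ContinuousLinearMap.smul_apply, smul_eq_mul]
    ring
  have hθfd : fderiv ℝ θ = fun x => a x • fderiv ℝ φ x :=
    funext fun x => (hθ' x).fderiv
  have hθsmooth : ContDiff ℝ (⊤ : ℕ∞) θ := (Real.contDiff_exp.comp ((hφ.neg).div_const m))
  -- derivative of a
  have ha : ∀ x : E, HasFDerivAt a
      ((-1 / m) • (Real.exp (-φ x / m) • ((-1 / m) • fderiv ℝ φ x))) x := by
    intro x
    exact ((hc x).exp).mul_const (-1 / m)
  -- second derivative
  have key : ∀ x : E, fderiv ℝ (fderiv ℝ θ) x =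
      a x • fderiv ℝ (fderiv ℝ φ) x +
        ((-1 / m) • (Real.exp (-φ x / m) • ((-1 / m) • fderiv ℝ φ x))).smulRight
          (fderiv ℝ φ x) := by
    intro x
    rw [hθfd]
    exact ((ha x).smul (hφ'd x).hasFDerivAt).fderiv
  refine ⟨θ, fun x => Real.exp (-φ x / m) * (lam - τ x) / m, hθsmooth, ?_, rfl, ?_⟩
  · exact ((Real.contDiff_exp.comp ((hφ.neg).div_const m)).mul
      ((contDiff_const.sub hτ))).div_const m
  · intro x X Y
    rw [key x]
    simp only [ContinuousLinearMap.add_apply, ContinuousLinearMap.smul_apply,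
      ContinuousLinearMap.smulRight_apply, smul_eq_mul, hadef]
    rw [hsol x X Y]
    have := Real.exp_ne_zero (-φ x / m)
    field_simp
    ring
end

section
/- Let M = B ×_b F be a warped product with nonconstant warping function b, and suppose (M,g,φ,1/m,λ) is a generalized quasi Yamabe gradient soliton with θ = e^{-φ/m} depending only on B. Then g_B(∇^B θ, ∇^B b) = (λ - τ) (b θ)/m, where τ is the scalar curvature of M; in particular, where τ ≠ λ, the gradients of the potential function and the warping function are not orthogonal. -/
noncomputable section

/-- The warped product metric `g = g_B ⊕ b² g_F` on `B × F` (flat inner-product model). -/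
def warpedMetric {B F : Type*} [NormedAddCommGroup B] [InnerProductSpace ℝ B]
    [NormedAddCommGroup F] [InnerProductSpace ℝ F]
    (b : B → ℝ) (p : B × F) (U W : B × F) : ℝ :=
  (inner ℝ U.1 W.1 : ℝ) + (b p.1) ^ 2 * (inner ℝ U.2 W.2 : ℝ)

/-- Hessian of a function on the warped product `B ×_b F` with respect to the
Levi-Civita connection of `g = g_B ⊕ b² g_F` (flat base and fiber model). -/
def warpedHessian {B F : Type*} [NormedAddCommGroup B] [InnerProductSpace ℝ B]
    [CompleteSpace B] [NormedAddCommGroup F] [InnerProductSpace ℝ F]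
    (b : B → ℝ) (θ : B × F → ℝ) (p : B × F) (U W : B × F) : ℝ :=
  fderiv ℝ (fderiv ℝ θ) p U W
    + b p.1 * (inner ℝ U.2 W.2 : ℝ) * fderiv ℝ θ p (gradient b p.1, 0)
    - (fderiv ℝ b p.1 U.1 / b p.1) * fderiv ℝ θ p (0, W.2)
    - (fderiv ℝ b p.1 W.1 / b p.1) * fderiv ℝ θ p (0, U.2)

section Aux

open InnerProductSpace in
lemma fderiv_eq_inner_gradient {E : Type*} [NormedAddCommGroup E] [InnerProductSpace ℝ E]
    [CompleteSpace E] (f : E → ℝ) (x : E) (hf : DifferentiableAt ℝ f x) (y : E) :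
    fderiv ℝ f x y = (inner ℝ (gradient f x) y : ℝ) := by
  have := hf.hasGradientAt.hasFDerivAt.fderiv
  rw [this, toDual_apply_apply]

variable {B F : Type*} [NormedAddCommGroup B] [InnerProductSpace ℝ B]
    [NormedAddCommGroup F] [InnerProductSpace ℝ F]

lemma fderiv_comp_fst (θ : B → ℝ) (hθ : Differentiable ℝ θ) (p : B × F) :
    fderiv ℝ (fun q : B × F => θ q.1) p
      = (fderiv ℝ θ p.1).comp (ContinuousLinearMap.fst ℝ B F) := by
  exact (((hθ p.1).hasFDerivAt).comp p (hasFDerivAt_fst)).fderiv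

lemma fderiv2_comp_fst (θ : B → ℝ) (hθ : ContDiff ℝ (⊤ : ℕ∞) θ) (p : B × F) (v : F) :
    fderiv ℝ (fderiv ℝ (fun q : B × F => θ q.1)) p ((0 : B), v) = 0 := by
  have hθd : Differentiable ℝ θ := hθ.differentiable (by simp)
  have hθ' : Differentiable ℝ (fderiv ℝ θ) :=
    (hθ.fderiv_right (m := 1) (by exact WithTop.coe_le_coe.mpr le_top)).differentiable one_ne_zero
  set R : (B →L[ℝ] ℝ) →L[ℝ] ((B × F) →L[ℝ] ℝ) :=
    (ContinuousLinearMap.compL ℝ (B × F) B ℝ).flip (ContinuousLinearMap.fst ℝ B F)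
  have hfun : fderiv ℝ (fun q : B × F => θ q.1) = fun p : B × F => R (fderiv ℝ θ p.1) := by
    funext q
    exact fderiv_comp_fst θ hθd q
  rw [hfun]
  have h2 : HasFDerivAt (fun x : B => R (fderiv ℝ θ x))
      (R.comp (fderiv ℝ (fderiv ℝ θ) p.1)) p.1 := by
    have hR : HasFDerivAt R R (fderiv ℝ θ p.1) := by exact ContinuousLinearMap.hasFDerivAt _
    exact HasFDerivAt.comp (x := p.1) (g := R) hR (hθ' p.1).hasFDerivAt
  have h1 : HasFDerivAt (fun p : B × F => R (fderiv ℝ θ p.1))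
      ((R.comp (fderiv ℝ (fderiv ℝ θ) p.1)).comp (ContinuousLinearMap.fst ℝ B F)) p :=
    HasFDerivAt.comp (x := p) (g := fun x : B => R (fderiv ℝ θ x)) (f := Prod.fst) h2 (ContinuousLinearMap.fst ℝ B F).hasFDerivAt
  rw [h1.fderiv]
  simp

end Aux

/-- For a generalized quasi Yamabe gradient soliton warped product
`M = B ×_b F` with nonconstant warping function `b` and `θ = e^{-φ/m}` depending
only on the base `B` (soliton equation `Hess θ = -(θ/m)(τ - lam) g`, `τ` the scalar
curvature of `M`), one has `g_B(∇^B θ, ∇^B b) = (lam - τ) b θ / m`; in particular,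
where `τ ≠ lam` the gradients of the potential and of the warping function are
not orthogonal. -/
theorem gqy_warped_gradients_not_orthogonal
    {B F : Type*} [NormedAddCommGroup B] [InnerProductSpace ℝ B] [CompleteSpace B]
    [NormedAddCommGroup F] [InnerProductSpace ℝ F] [CompleteSpace F] [Nontrivial F]
    (b : B → ℝ) (hb : ContDiff ℝ (⊤ : ℕ∞) b) (hbpos : ∀ x, 0 < b x)
    (hbnc : ∃ x y : B, b x ≠ b y)
    (τ : B × F → ℝ) (lam m : ℝ) (hm : m ≠ 0)
    (φ : B → ℝ) (hφ : ContDiff ℝ (⊤ : ℕ∞) φ)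
    (θ : B → ℝ) (hθ : θ = fun x => Real.exp (-φ x / m))
    (hsol : ∀ p : B × F, ∀ U W : B × F,
      warpedHessian b (fun q => θ q.1) p U W
        = -(θ p.1 / m) * (τ p - lam) * warpedMetric b p U W) :
    ∀ p : B × F,
      (inner ℝ (gradient θ p.1) (gradient b p.1) : ℝ) = (lam - τ p) * (b p.1 * θ p.1) / m
      ∧ (τ p ≠ lam → (inner ℝ (gradient θ p.1) (gradient b p.1) : ℝ) ≠ 0) := by
  intro p
  obtain ⟨v, hv⟩ := exists_ne (0 : F)
  have hθsm : ContDiff ℝ (⊤ : ℕ∞) θ := by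
    rw [hθ]
    exact Real.contDiff_exp.comp ((hφ.neg).div_const m)
  have hθd : Differentiable ℝ θ := hθsm.differentiable (by simp)
  have hθpos : 0 < θ p.1 := by rw [hθ]; exact Real.exp_pos _
  have hbp : 0 < b p.1 := hbpos p.1
  have e1 : fderiv ℝ (fun q : B × F => θ q.1) p ((0 : B), v) = 0 := by
    rw [fderiv_comp_fst θ hθd p]; simp
  have e2 : fderiv ℝ (fun q : B × F => θ q.1) p (gradient b p.1, (0 : F))
      = (inner ℝ (gradient θ p.1) (gradient b p.1) : ℝ) := by
    rw [fderiv_comp_fst θ hθd p]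
    simpa using fderiv_eq_inner_gradient θ p.1 (hθd p.1) (gradient b p.1)
  have e3 := fderiv2_comp_fst θ hθsm p v
  have key := hsol p ((0 : B), v) ((0 : B), v)
  simp only [warpedHessian, warpedMetric, e1, e2, e3] at key
  simp only [map_zero, ContinuousLinearMap.zero_apply, inner_zero_left, zero_div, zero_mul,
    sub_zero, mul_zero, zero_add] at key
  have hvv : (0 : ℝ) < (inner ℝ v v : ℝ) := by
    have h0 : ‖v‖ ≠ 0 := norm_ne_zero_iff.mpr hv
    rw [real_inner_self_eq_norm_sq]; positivity
  set I : ℝ := (inner ℝ (gradient θ p.1) (gradient b p.1) : ℝ) with hI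
  have hne : b p.1 * (inner ℝ v v : ℝ) ≠ 0 := by positivity
  have h2 : b p.1 * (inner ℝ v v : ℝ) * I
      = b p.1 * (inner ℝ v v : ℝ) * (-(θ p.1 / m) * (τ p - lam) * b p.1) := by
    linear_combination key
  have h1 : I = -(θ p.1 / m) * (τ p - lam) * b p.1 := mul_left_cancel₀ hne h2
  have hmain : I = (lam - τ p) * (b p.1 * θ p.1) / m := by rw [h1]; ring
  refine ⟨hmain, fun hτ => ?_⟩
  rw [hmain]
  apply div_ne_zero _ hm
  exact mul_ne_zero (sub_ne_zero.mpr (Ne.symm hτ)) (by positivity)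
end
end

section
/- Let f(x,y,z,t) be a smooth function on ℝ⁴ satisfying: f_{xx} = f_{xy} = f_{yy} = f_{yz} = f_{zz} = f_{xt} = f_{zt} = 0, f_{xz} = f_{yt}, with f_{xz} constant. Then there exist constants c₀, c₁, c₂, c₃ ∈ ℝ and a smooth function E(t) such that f(x,y,z,t) = x(c₀ z + c₂) + y(c₀ t + c₁) + c₃ z + E(t). -/
noncomputable section

/-- Partial derivative in the `i`-th coordinate direction. -/
def pd {n : ℕ} (i : Fin n) (f : (Fin n → ℝ) → ℝ) (p : Fin n → ℝ) : ℝ :=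
  fderiv ℝ f p (Pi.single i 1)

theorem contDiff_pd {n : ℕ} (i : Fin n) {f : (Fin n → ℝ) → ℝ} (hf : ContDiff ℝ (⊤ : ℕ∞) f) :
    ContDiff ℝ (⊤ : ℕ∞) (pd i f) := by
  have h1 : ContDiff ℝ (⊤ : ℕ∞) (fderiv ℝ f) := hf.fderiv_right (by simp)
  exact (ContinuousLinearMap.apply ℝ ℝ (Pi.single i 1)).contDiff.comp h1

theorem pd_comm {n : ℕ} {f : (Fin n → ℝ) → ℝ} (hf : ContDiff ℝ (⊤ : ℕ∞) f) (i j : Fin n)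
    (p : Fin n → ℝ) : pd i (pd j f) p = pd j (pd i f) p := by
  have hd : Differentiable ℝ (fderiv ℝ f) :=
    (hf.fderiv_right (m := (⊤ : ℕ∞)) (by simp)).differentiable (by simp)
  have key : ∀ (k : Fin n) (w : Fin n → ℝ),
      pd k (fun q => fderiv ℝ f q w) p = fderiv ℝ (fderiv ℝ f) p (Pi.single k 1) w := by
    intro k w
    have h2 : HasFDerivAt (fun q => fderiv ℝ f q w)
        ((ContinuousLinearMap.apply ℝ ℝ w).comp (fderiv ℝ (fderiv ℝ f) p)) p :=
      (ContinuousLinearMap.apply ℝ ℝ w).hasFDerivAt.comp p (hd p).hasFDerivAt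
    simp [pd, h2.fderiv]
  have hs : IsSymmSndFDerivAt ℝ f p := (hf.contDiffAt).isSymmSndFDerivAt (by norm_num; exact WithTop.coe_le_coe.mpr (le_top : (2:ℕ∞) ≤ ⊤))
  calc pd i (pd j f) p = fderiv ℝ (fderiv ℝ f) p (Pi.single i 1) (Pi.single j 1) :=
        key i (Pi.single j 1)
    _ = fderiv ℝ (fderiv ℝ f) p (Pi.single j 1) (Pi.single i 1) := hs _ _
    _ = pd j (pd i f) p := (key j (Pi.single i 1)).symm

theorem const_along {n : ℕ} {u : (Fin n → ℝ) → ℝ} (hu : Differentiable ℝ u)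
    (i : Fin n) (h : ∀ p, pd i u p = 0) (p : Fin n → ℝ) (s : ℝ) :
    u (Function.update p i s) = u p := by
  have hψ : ∀ s : ℝ, Function.update p i s = p + (s - p i) • (Pi.single i 1 : Fin n → ℝ) := by
    intro s; funext j
    rcases eq_or_ne j i with rfl | hj
    · simp
    · simp [Function.update_of_ne hj, Pi.single_eq_of_ne hj]
  set φ : ℝ → ℝ := fun s => u (p + (s - p i) • (Pi.single i 1 : Fin n → ℝ)) with hφ
  have hdiff : ∀ s : ℝ, HasDerivAt φ 0 s := by
    intro s
    have hlin : HasDerivAt (fun s : ℝ => p + (s - p i) • (Pi.single i 1 : Fin n → ℝ))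
        (Pi.single i 1) s := by
      have : HasDerivAt (fun s : ℝ => s - p i) 1 s := (hasDerivAt_id s).sub_const _
      simpa using (this.smul_const (Pi.single i (1:ℝ))).const_add p
    have h2 := (hu _).hasFDerivAt.comp_hasDerivAt s hlin
    have h0 : fderiv ℝ u (p + (s - p i) • (Pi.single i 1 : Fin n → ℝ)) (Pi.single i 1) = 0 := h _
    have h3 : HasDerivAt φ (fderiv ℝ u (p + (s - p i) • (Pi.single i 1 : Fin n → ℝ)) (Pi.single i 1)) s := h2
    rw [h0] at h3; exact h3
  have hc : φ s = φ (p i) := by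
    apply is_const_of_deriv_eq_zero (fun s => (hdiff s).differentiableAt)
    intro s; exact (hdiff s).deriv
  calc u (Function.update p i s) = φ s := by rw [hψ]
    _ = φ (p i) := hc
    _ = u p := by rw [hφ]; simp

theorem eq_of_pd_zero {n : ℕ} {u : (Fin n → ℝ) → ℝ} (hu : Differentiable ℝ u)
    (h : ∀ i p, pd i u p = 0) (p q : Fin n → ℝ) : u p = u q := by
  apply is_const_of_fderiv_eq_zero hu
  intro x
  ext v
  have hv : v = ∑ i, (v i) • (Pi.single i 1 : Fin n → ℝ) := by
    funext j
    simp [Finset.sum_apply, Pi.single_apply]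
  rw [hv]
  rw [map_sum]
  simp only [map_smul]
  have h0 : ∀ i : Fin n, fderiv ℝ u x (Pi.single i 1) = 0 := fun i => h i x
  simp [h0]

theorem pd_sub_mul_proj {n : ℕ} {u : (Fin n → ℝ) → ℝ} (hu : Differentiable ℝ u)
    (c : ℝ) (j i : Fin n) (p : Fin n → ℝ) :
    pd i (fun q => u q - c * q j) p = pd i u p - c * (Pi.single i 1 : Fin n → ℝ) j := by
  have hp := (ContinuousLinearMap.proj j : (Fin n → ℝ) →L[ℝ] ℝ).hasFDerivAt (x := p)
  have h1 : HasFDerivAt (fun q : Fin n → ℝ => c * q j)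
      (c • (ContinuousLinearMap.proj j : (Fin n → ℝ) →L[ℝ] ℝ)) p := hp.const_mul c
  have h2 := ((hu p).hasFDerivAt).sub h1
  simp [pd, (show HasFDerivAt (fun q => u q - c * q j) _ p from h2).fderiv]


/-- If a smooth `f(x,y,z,t)` on `ℝ⁴` (coordinates
`(x,y,z,t) = (0,1,2,3)`) satisfies `f_xx = f_xy = f_yy = f_yz = f_zz = f_xt
= f_zt = 0`, `f_xz = f_yt` with `f_xz` constant, then
`f(x,y,z,t) = x(c₀ z + c₂) + y(c₀ t + c₁) + c₃ z + E(t)` for constants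
`c₀, c₁, c₂, c₃` and a smooth function `E`. -/
theorem walker4_soliton_pde_system
    (f : (Fin 4 → ℝ) → ℝ) (hf : ContDiff ℝ (⊤ : ℕ∞) f)
    (hxx : ∀ p, pd 0 (pd 0 f) p = 0)
    (hxy : ∀ p, pd 0 (pd 1 f) p = 0)
    (hyy : ∀ p, pd 1 (pd 1 f) p = 0)
    (hyz : ∀ p, pd 1 (pd 2 f) p = 0)
    (hzz : ∀ p, pd 2 (pd 2 f) p = 0)
    (hxt : ∀ p, pd 0 (pd 3 f) p = 0)
    (hzt : ∀ p, pd 2 (pd 3 f) p = 0)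
    (hxzyt : ∀ p, pd 0 (pd 2 f) p = pd 1 (pd 3 f) p)
    (hconst : ∀ p q, pd 0 (pd 2 f) p = pd 0 (pd 2 f) q) :
    ∃ c₀ c₁ c₂ c₃ : ℝ, ∃ E : ℝ → ℝ, ContDiff ℝ (⊤ : ℕ∞) E ∧
      ∀ p : Fin 4 → ℝ,
        f p = p 0 * (c₀ * p 2 + c₂) + p 1 * (c₀ * p 3 + c₁) + c₃ * p 2 + E (p 3) := by
  set c₀ : ℝ := pd 0 (pd 2 f) 0 with hc₀
  set c₁ : ℝ := pd 1 f 0 with hc₁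
  set c₂ : ℝ := pd 0 f 0 with hc₂
  set c₃ : ℝ := pd 2 f 0 with hc₃
  have hd0 : Differentiable ℝ (pd (0 : Fin 4) f) := (contDiff_pd 0 hf).differentiable (by simp)
  have hd1 : Differentiable ℝ (pd (1 : Fin 4) f) := (contDiff_pd 1 hf).differentiable (by simp)
  have hd2 : Differentiable ℝ (pd (2 : Fin 4) f) := (contDiff_pd 2 hf).differentiable (by simp)
  have hC : ∀ p, pd 0 (pd 2 f) p = c₀ := fun p => hconst p 0
  -- pd 0 f
  have hu0 : ∀ p, pd 0 f p = c₀ * p 2 + c₂ := by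
    intro p
    have hv : ∀ (i : Fin 4) q, pd i (fun q => pd 0 f q - c₀ * q 2) q = 0 := by
      intro i q
      rw [pd_sub_mul_proj hd0 c₀ 2 i q]
      fin_cases i
      · show pd 0 (pd 0 f) q - c₀ * (Pi.single (0:Fin 4) (1:ℝ) : Fin 4 → ℝ) 2 = 0
        rw [hxx q]; simp [Pi.single_apply]
      · show pd 1 (pd 0 f) q - c₀ * (Pi.single (1:Fin 4) (1:ℝ) : Fin 4 → ℝ) 2 = 0
        rw [pd_comm hf 1 0 q, hxy q]; simp [Pi.single_apply]
      · show pd 2 (pd 0 f) q - c₀ * (Pi.single (2:Fin 4) (1:ℝ) : Fin 4 → ℝ) 2 = 0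
        rw [pd_comm hf 2 0 q, hC q]; simp [Pi.single_apply]
      · show pd 3 (pd 0 f) q - c₀ * (Pi.single (3:Fin 4) (1:ℝ) : Fin 4 → ℝ) 2 = 0
        rw [pd_comm hf 3 0 q, hxt q]; simp [Pi.single_apply]
    have hdv : Differentiable ℝ (fun q : Fin 4 → ℝ => pd 0 f q - c₀ * q 2) :=
      hd0.sub (((ContinuousLinearMap.proj 2 : (Fin 4 → ℝ) →L[ℝ] ℝ).differentiable).const_mul c₀)
    have := eq_of_pd_zero hdv (fun i q => hv i q) p 0
    simp only [Pi.zero_apply, mul_zero, sub_zero] at this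
    linarith [this]
  -- pd 1 f
  have hu1 : ∀ p, pd 1 f p = c₀ * p 3 + c₁ := by
    intro p
    have hv : ∀ (i : Fin 4) q, pd i (fun q => pd 1 f q - c₀ * q 3) q = 0 := by
      intro i q
      rw [pd_sub_mul_proj hd1 c₀ 3 i q]
      fin_cases i
      · show pd 0 (pd 1 f) q - c₀ * (Pi.single (0:Fin 4) (1:ℝ) : Fin 4 → ℝ) 3 = 0
        rw [hxy q]; simp [Pi.single_apply]
      · show pd 1 (pd 1 f) q - c₀ * (Pi.single (1:Fin 4) (1:ℝ) : Fin 4 → ℝ) 3 = 0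
        rw [hyy q]; simp [Pi.single_apply]
      · show pd 2 (pd 1 f) q - c₀ * (Pi.single (2:Fin 4) (1:ℝ) : Fin 4 → ℝ) 3 = 0
        rw [pd_comm hf 2 1 q, hyz q]; simp [Pi.single_apply]
      · show pd 3 (pd 1 f) q - c₀ * (Pi.single (3:Fin 4) (1:ℝ) : Fin 4 → ℝ) 3 = 0
        rw [pd_comm hf 3 1 q, ← hxzyt q, hC q]; simp [Pi.single_apply]
    have hdv : Differentiable ℝ (fun q : Fin 4 → ℝ => pd 1 f q - c₀ * q 3) :=
      hd1.sub (((ContinuousLinearMap.proj 3 : (Fin 4 → ℝ) →L[ℝ] ℝ).differentiable).const_mul c₀)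
    have := eq_of_pd_zero hdv (fun i q => hv i q) p 0
    simp only [Pi.zero_apply, mul_zero, sub_zero] at this
    linarith [this]
  -- pd 2 f
  have hu2 : ∀ p, pd 2 f p = c₀ * p 0 + c₃ := by
    intro p
    have hv : ∀ (i : Fin 4) q, pd i (fun q => pd 2 f q - c₀ * q 0) q = 0 := by
      intro i q
      rw [pd_sub_mul_proj hd2 c₀ 0 i q]
      fin_cases i
      · show pd 0 (pd 2 f) q - c₀ * (Pi.single (0:Fin 4) (1:ℝ) : Fin 4 → ℝ) 0 = 0
        rw [hC q]; simp [Pi.single_apply]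
      · show pd 1 (pd 2 f) q - c₀ * (Pi.single (1:Fin 4) (1:ℝ) : Fin 4 → ℝ) 0 = 0
        rw [hyz q]; simp [Pi.single_apply]
      · show pd 2 (pd 2 f) q - c₀ * (Pi.single (2:Fin 4) (1:ℝ) : Fin 4 → ℝ) 0 = 0
        rw [hzz q]; simp [Pi.single_apply]
      · show pd 3 (pd 2 f) q - c₀ * (Pi.single (3:Fin 4) (1:ℝ) : Fin 4 → ℝ) 0 = 0
        rw [pd_comm hf 3 2 q, hzt q]; simp [Pi.single_apply]
    have hdv : Differentiable ℝ (fun q : Fin 4 → ℝ => pd 2 f q - c₀ * q 0) :=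
      hd2.sub (((ContinuousLinearMap.proj 0 : (Fin 4 → ℝ) →L[ℝ] ℝ).differentiable).const_mul c₀)
    have := eq_of_pd_zero hdv (fun i q => hv i q) p 0
    simp only [Pi.zero_apply, mul_zero, sub_zero] at this
    linarith [this]
  -- the function g
  set Q : (Fin 4 → ℝ) → ℝ :=
    fun p => p 0 * (c₀ * p 2 + c₂) + p 1 * (c₀ * p 3 + c₁) + c₃ * p 2 with hQ
  have hQc : ContDiff ℝ (⊤ : ℕ∞) Q := by
    apply ContDiff.add
    apply ContDiff.add
    · exact ((ContinuousLinearMap.proj 0 : (Fin 4 → ℝ) →L[ℝ] ℝ).contDiff).mul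
        ((((ContinuousLinearMap.proj 2 : (Fin 4 → ℝ) →L[ℝ] ℝ).contDiff).const_smul c₀).add contDiff_const)
    · exact ((ContinuousLinearMap.proj 1 : (Fin 4 → ℝ) →L[ℝ] ℝ).contDiff).mul
        ((((ContinuousLinearMap.proj 3 : (Fin 4 → ℝ) →L[ℝ] ℝ).contDiff).const_smul c₀).add contDiff_const)
    · exact ((ContinuousLinearMap.proj 2 : (Fin 4 → ℝ) →L[ℝ] ℝ).contDiff).const_smul c₃
  set g : (Fin 4 → ℝ) → ℝ := fun p => f p - Q p with hg
  have hgc : ContDiff ℝ (⊤ : ℕ∞) g := hf.sub hQc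
  have hgd : Differentiable ℝ g := hgc.differentiable (by simp)
  -- derivative of Q
  have hQd : ∀ p : Fin 4 → ℝ, HasFDerivAt Q
      (((p 0 • ((c₀ • (ContinuousLinearMap.proj 2 : (Fin 4 → ℝ) →L[ℝ] ℝ))) +
          (c₀ * p 2 + c₂) • (ContinuousLinearMap.proj 0 : (Fin 4 → ℝ) →L[ℝ] ℝ)) +
        (p 1 • ((c₀ • (ContinuousLinearMap.proj 3 : (Fin 4 → ℝ) →L[ℝ] ℝ))) +
          (c₀ * p 3 + c₁) • (ContinuousLinearMap.proj 1 : (Fin 4 → ℝ) →L[ℝ] ℝ))) +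
        c₃ • (ContinuousLinearMap.proj 2 : (Fin 4 → ℝ) →L[ℝ] ℝ)) p := by
    intro p
    apply HasFDerivAt.add
    apply HasFDerivAt.add
    · exact ((ContinuousLinearMap.proj 0 : (Fin 4 → ℝ) →L[ℝ] ℝ).hasFDerivAt).mul
        ((((ContinuousLinearMap.proj 2 : (Fin 4 → ℝ) →L[ℝ] ℝ).hasFDerivAt).const_mul c₀).add_const c₂)
    · exact ((ContinuousLinearMap.proj 1 : (Fin 4 → ℝ) →L[ℝ] ℝ).hasFDerivAt).mul
        ((((ContinuousLinearMap.proj 3 : (Fin 4 → ℝ) →L[ℝ] ℝ).hasFDerivAt).const_mul c₀).add_const c₁)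
    · exact ((ContinuousLinearMap.proj 2 : (Fin 4 → ℝ) →L[ℝ] ℝ).hasFDerivAt).const_mul c₃
  have hpdg : ∀ (i : Fin 4) p, pd i g p = pd i f p -
      (((p 0 • ((c₀ • (ContinuousLinearMap.proj 2 : (Fin 4 → ℝ) →L[ℝ] ℝ))) +
          (c₀ * p 2 + c₂) • (ContinuousLinearMap.proj 0 : (Fin 4 → ℝ) →L[ℝ] ℝ)) +
        (p 1 • ((c₀ • (ContinuousLinearMap.proj 3 : (Fin 4 → ℝ) →L[ℝ] ℝ))) +
          (c₀ * p 3 + c₁) • (ContinuousLinearMap.proj 1 : (Fin 4 → ℝ) →L[ℝ] ℝ))) +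
        c₃ • (ContinuousLinearMap.proj 2 : (Fin 4 → ℝ) →L[ℝ] ℝ)) (Pi.single i 1) := by
    intro i p
    have h2 : HasFDerivAt (fun p => f p - Q p) _ p := ((hf.differentiable (by simp) p).hasFDerivAt).sub (hQd p)
    simp only [pd, hg, h2.fderiv, ContinuousLinearMap.coe_sub', Pi.sub_apply]
  have hg0 : ∀ p, pd 0 g p = 0 := by
    intro p
    rw [hpdg 0 p, hu0 p]
    simp [Pi.single_apply]
  have hg1 : ∀ p, pd 1 g p = 0 := by
    intro p
    rw [hpdg 1 p, hu1 p]
    simp [Pi.single_apply]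
  have hg2 : ∀ p, pd 2 g p = 0 := by
    intro p
    rw [hpdg 2 p, hu2 p]
    simp [Pi.single_apply]
    ring
  -- g depends only on the last coordinate
  set E : ℝ → ℝ := fun t => g (t • (Pi.single 3 1 : Fin 4 → ℝ)) with hE
  have hEc : ContDiff ℝ (⊤ : ℕ∞) E :=
    hgc.comp (contDiff_id.smul contDiff_const)
  have hgE : ∀ p : Fin 4 → ℝ, g p = E (p 3) := by
    intro p
    have e0 := const_along hgd 0 hg0 p 0
    have e1 := const_along hgd 1 hg1 (Function.update p 0 0) 0
    have e2 := const_along hgd 2 hg2 (Function.update (Function.update p 0 0) 1 0) 0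
    have heq : Function.update (Function.update (Function.update p 0 0) 1 0) 2 0
        = (p 3) • (Pi.single 3 1 : Fin 4 → ℝ) := by
      funext j
      fin_cases j <;> simp [Function.update, Pi.single_apply]
    rw [hE]
    show g p = g ((p 3) • (Pi.single 3 1 : Fin 4 → ℝ))
    rw [← heq, e2, e1, e0]
  refine ⟨c₀, c₁, c₂, c₃, E, hEc, fun p => ?_⟩
  have := hgE p
  rw [hg] at this
  simp only [hQ] at this
  linarith [this]
end
end
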